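/- arXiv:2102.12688 — 2 statements merged into one kernel-verified Lean document; each statement's English description precedes it below -/
import Mathlib

section
/- For a real number $q$ with $0 < q < 1$, the sequence of ratios $H_{n+1}^{(n+1)}(q) / H_n^{(n)}(q)$ converges, and $\lim_{n\to\infty} \frac{H_{n+1}^{(n+1)}(q)}{H_n^{(n)}(q)} = q$. -/
/-- The `q`-integer `[n]_q = (1 - q^n)/(1 - q)`. -/
noncomputable def qint (q : ℝ) (n : ℕ) : ℝ := (1 - q ^ n) / (1 - q)

/-- The `q`-factorial `[n]_q! = [n]_q [n-1]_q ⋯ [1]_q`, with `[0]_q! = 1`. -/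
noncomputable def qfact (q : ℝ) : ℕ → ℝ
  | 0 => 1
  | n + 1 => qint q (n + 1) * qfact q n

/-- The `q`-binomial coefficient `C(n,k)_q = [n]_q!/([k]_q! [n-k]_q!)`, equal to `0` for `k > n`. -/
noncomputable def qbinom (q : ℝ) (n k : ℕ) : ℝ :=
  if k ≤ n then qfact q n / (qfact q k * qfact q (n - k)) else 0

/-- The `q`-hyperharmonic numbers: `H_n^{(0)}(q) = 1/(q [n]_q)` and
`H_n^{(r)}(q) = ∑_{j=1}^n q^j H_j^{(r-1)}(q)` for `r ≥ 1` (so `H_0^{(r)}(q) = 0`). -/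
noncomputable def qhyp (q : ℝ) : ℕ → ℕ → ℝ
  | 0, n => 1 / (q * qint q n)
  | r + 1, n => ∑ j ∈ Finset.Icc 1 n, q ^ j * qhyp q r j

/-!
By induction on the order, `H_n^{(r+1)}(q) = C(r+n, r)_q (H_{r+n}(q) - H_r(q))`, the step being
q-Pascal plus absorption. On the diagonal the ratio of consecutive terms therefore splits as
`C(2k+3, k+1)_q / C(2k+1, k)_q = [2k+2]_q [2k+3]_q / ([k+1]_q [k+2]_q)`, which tends to `1` because
`[n]_q → 1/(1-q)`, times the ratio of consecutive tails `H_{2k+1}(q) - H_k(q)`. Squeezing every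
`1/[j]_q` of such a tail between `1 - q` and `1/[k+1]_q` shows that it is `q^k (1 + o(1))`, so the
tail ratio tends to `q`.
-/

open Finset Filter Topology

variable {q : ℝ}

lemma qint_eq_geom_sum (hq1 : q ≠ 1) (n : ℕ) : qint q n = ∑ i ∈ range n, q ^ i := by
  rw [geom_sum_eq hq1, qint, ← neg_div_neg_eq, neg_sub, neg_sub]

lemma qint_pos (hq0 : 0 ≤ q) (hq1 : q ≠ 1) {n : ℕ} (hn : n ≠ 0) : 0 < qint q n := by
  rw [qint_eq_geom_sum hq1]
  exact sum_pos' (fun i _ => pow_nonneg hq0 i) ⟨0, by simpa [Nat.pos_iff_ne_zero], by simp⟩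

lemma qint_mono (hq0 : 0 ≤ q) (hq1 : q ≠ 1) : Monotone (qint q) := fun m n hmn => by
  simp only [qint_eq_geom_sum hq1]
  exact sum_le_sum_of_subset_of_nonneg (range_mono hmn) fun i _ _ => pow_nonneg hq0 i

lemma qint_add (hq1 : q ≠ 1) (m n : ℕ) : qint q (m + n) = qint q m + q ^ m * qint q n := by
  have : 1 - q ≠ 0 := sub_ne_zero.mpr hq1.symm
  simp only [qint]
  field_simp
  ring

lemma qint_le_inv_one_sub (hq0 : 0 ≤ q) (hq1 : q < 1) (n : ℕ) : qint q n ≤ (1 - q)⁻¹ := by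
  rw [qint, div_eq_mul_inv]
  exact mul_le_of_le_one_left (inv_nonneg.mpr (by linarith)) (by linarith [pow_nonneg hq0 n])

lemma tendsto_qint_atTop (hq : |q| < 1) : Tendsto (qint q) atTop (𝓝 (1 - q)⁻¹) := by
  have h := ((tendsto_pow_atTop_nhds_zero_of_abs_lt_one hq).const_sub 1).div_const (1 - q)
  rwa [sub_zero, one_div] at h

lemma qfact_succ (n : ℕ) : qfact q (n + 1) = qint q (n + 1) * qfact q n := rfl

lemma qfact_pos (hq0 : 0 ≤ q) (hq1 : q ≠ 1) (n : ℕ) : 0 < qfact q n := by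
  induction n with
  | zero => exact one_pos
  | succ n ih => exact mul_pos (qint_pos hq0 hq1 n.succ_ne_zero) ih

lemma qbinom_of_add_eq {n k m : ℕ} (h : k + m = n) :
    qbinom q n k = qfact q n / (qfact q k * qfact q m) := by
  rw [qbinom, if_pos (h ▸ Nat.le_add_right k m), ← h, Nat.add_sub_cancel_left]

lemma qbinom_succ_mul_qint (hq0 : 0 ≤ q) (hq1 : q ≠ 1) (k n : ℕ) :
    qbinom q (k + n + 1) (k + 1) * qint q (k + 1) = qbinom q (k + n) k * qint q (k + n + 1) := by
  rw [qbinom_of_add_eq (by omega : k + 1 + n = k + n + 1), qbinom_of_add_eq rfl, qfact_succ,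
    qfact_succ]
  have := (qfact_pos hq0 hq1 k).ne'
  have := (qfact_pos hq0 hq1 n).ne'
  have := (qint_pos hq0 hq1 k.succ_ne_zero).ne'
  field_simp

lemma qbinom_succ_succ (hq0 : 0 ≤ q) (hq1 : q ≠ 1) (k n : ℕ) :
    qbinom q (k + n + 2) (k + 1) =
      q ^ (n + 1) * qbinom q (k + n + 1) k + qbinom q (k + n + 1) (k + 1) := by
  rw [qbinom_of_add_eq (by omega : k + 1 + (n + 1) = k + n + 2),
    qbinom_of_add_eq (by omega : k + (n + 1) = k + n + 1),
    qbinom_of_add_eq (by omega : k + 1 + n = k + n + 1), qfact_succ (k + n + 1), qfact_succ k,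
    qfact_succ n, show k + n + 1 + 1 = n + 1 + (k + 1) by omega, qint_add hq1]
  have := (qfact_pos hq0 hq1 k).ne'
  have := (qfact_pos hq0 hq1 n).ne'
  have := (qint_pos hq0 hq1 k.succ_ne_zero).ne'
  have := (qint_pos hq0 hq1 n.succ_ne_zero).ne'
  field_simp
  ring

lemma qbinom_zero_right (hq0 : 0 ≤ q) (hq1 : q ≠ 1) (n : ℕ) : qbinom q n 0 = 1 := by
  rw [qbinom_of_add_eq (zero_add n), qfact, one_mul, div_self (qfact_pos hq0 hq1 n).ne']

/-- `H_n(q) = ∑_{j=1}^n q^{j-1}/[j]_q`, indexed from `0`. -/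
noncomputable def qharm (q : ℝ) (n : ℕ) : ℝ := ∑ i ∈ range n, q ^ i / qint q (i + 1)

lemma qharm_succ (n : ℕ) : qharm q (n + 1) = qharm q n + q ^ n / qint q (n + 1) :=
  sum_range_succ _ n

lemma qhyp_succ_zero (r : ℕ) : qhyp q (r + 1) 0 = 0 := rfl

lemma qhyp_succ_succ (r n : ℕ) :
    qhyp q (r + 1) (n + 1) = qhyp q (r + 1) n + q ^ (n + 1) * qhyp q r (n + 1) :=
  sum_Icc_succ_top (Nat.le_add_left 1 n) _

lemma qhyp_one (hq0 : 0 < q) (n : ℕ) : qhyp q 1 n = qharm q n := by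
  induction n with
  | zero => rfl
  | succ n ih =>
    rw [qhyp_succ_succ, ih, qharm_succ, qhyp, pow_succ, mul_one_div, mul_comm q,
      mul_div_mul_right _ _ hq0.ne']

theorem qhyp_succ_eq (hq0 : 0 < q) (hq1 : q ≠ 1) (r n : ℕ) :
    qhyp q (r + 1) n = qbinom q (r + n) r * (qharm q (r + n) - qharm q r) := by
  induction r generalizing n with
  | zero => simp [qhyp_one hq0, qbinom_zero_right hq0.le hq1, qharm]
  | succ r ihr =>
    induction n with
    | zero => simp [qhyp_succ_zero]
    | succ n ihn =>
      have hpascal := qbinom_succ_succ hq0.le hq1 r n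
      have habsorb := qbinom_succ_mul_qint hq0.le hq1 r (n + 1)
      rw [show r + (n + 1) + 1 = r + n + 2 by omega, show r + (n + 1) = r + n + 1 by omega]
        at habsorb
      have hlast : qbinom q (r + n + 2) (r + 1) * (q ^ (r + n + 1) / qint q (r + n + 2)) =
          q ^ (n + 1) * (qbinom q (r + n + 1) r * (q ^ r / qint q (r + 1))) := by
        have := qint_pos hq0.le hq1 (r + n + 1).succ_ne_zero
        have := qint_pos hq0.le hq1 r.succ_ne_zero
        field_simp
        linear_combination q ^ (r + n + 1) * habsorb
      rw [qhyp_succ_succ, ihn, ihr, show r + 1 + (n + 1) = r + n + 1 + 1 by omega,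
        show r + 1 + n = r + n + 1 by omega, show r + (n + 1) = r + n + 1 by omega,
        qharm_succ (r + n + 1), qharm_succ r, show r + n + 1 + 1 = r + n + 2 by omega]
      linear_combination (qharm q r + q ^ r / qint q (r + 1) - qharm q (r + n + 1)) * hpascal - hlast

lemma qharm_add_sub (m n : ℕ) :
    qharm q (m + n) - qharm q m = ∑ i ∈ range n, q ^ (m + i) / qint q (m + i + 1) := by
  rw [qharm, qharm, sum_range_add, add_sub_cancel_left]

lemma pow_mul_one_sub_pow_le_qharm_add_sub (hq0 : 0 ≤ q) (hq1 : q < 1) (m n : ℕ) :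
    q ^ m * (1 - q ^ n) ≤ qharm q (m + n) - qharm q m := by
  rw [qharm_add_sub, ← geom_sum_mul_neg, ← mul_assoc, mul_sum, sum_mul]
  refine sum_le_sum fun i _ => ?_
  have hpos := qint_pos hq0 hq1.ne (m + i).succ_ne_zero
  rw [le_div_iff₀ hpos, ← pow_add, mul_assoc]
  refine mul_le_of_le_one_right (pow_nonneg hq0 _) ?_
  have := qint_le_inv_one_sub hq0 hq1 (m + i + 1)
  rwa [← le_div_iff₀' (by linarith), one_div]

lemma qharm_add_sub_le (hq0 : 0 ≤ q) (hq1 : q < 1) (m n : ℕ) :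
    qharm q (m + n) - qharm q m ≤ q ^ m * qint q n / qint q (m + 1) := by
  rw [qharm_add_sub, qint_eq_geom_sum hq1.ne, mul_sum, sum_div]
  refine sum_le_sum fun i _ => ?_
  rw [← pow_add]
  exact div_le_div_of_nonneg_left (pow_nonneg hq0 _) (qint_pos hq0 hq1.ne m.succ_ne_zero)
    (qint_mono hq0 hq1.ne (by omega))

lemma tendsto_qharm_central_sub_div_pow (hq0 : 0 < q) (hq1 : q < 1) :
    Tendsto (fun k => (qharm q (k + (k + 1)) - qharm q k) / q ^ k) atTop (𝓝 1) := by
  have hlower : Tendsto (fun k => 1 - q ^ (k + 1)) atTop (𝓝 1) := by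
    simpa using ((tendsto_pow_atTop_nhds_zero_of_lt_one hq0.le hq1).comp
      (tendsto_add_atTop_nat 1)).const_sub 1
  refine tendsto_of_tendsto_of_tendsto_of_le_of_le hlower tendsto_const_nhds (fun k => ?_)
    (fun k => ?_)
  · rw [le_div_iff₀ (pow_pos hq0 k), mul_comm]
    exact pow_mul_one_sub_pow_le_qharm_add_sub hq0.le hq1 k (k + 1)
  · rw [div_le_one (pow_pos hq0 k)]
    have := qharm_add_sub_le hq0.le hq1 k (k + 1)
    rwa [mul_div_assoc, div_self (qint_pos hq0.le hq1.ne k.succ_ne_zero).ne', mul_one] at this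

lemma tendsto_succ_div_of_tendsto_div_pow {u : ℕ → ℝ} {r c : ℝ} (hr : r ≠ 0) (hc : c ≠ 0)
    (h : Tendsto (fun k => u k / r ^ k) atTop (𝓝 c)) :
    Tendsto (fun k => u (k + 1) / u k) atTop (𝓝 r) := by
  -- both sides vanish when `u k = 0`
  have hu : ∀ k, u (k + 1) / u k = r * ((u (k + 1) / r ^ (k + 1)) / (u k / r ^ k)) := by
    intro k
    rw [pow_succ]
    field_simp
  simp_rw [hu]
  simpa [hc] using ((h.comp (tendsto_add_atTop_nat 1)).div h hc).const_mul r

lemma qbinom_central_succ_div (hq0 : 0 ≤ q) (hq1 : q ≠ 1) (k : ℕ) :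
    qbinom q (k + 1 + (k + 1 + 1)) (k + 1) / qbinom q (k + (k + 1)) k =
      qint q (2 * k + 2) * qint q (2 * k + 3) / (qint q (k + 1) * qint q (k + 2)) := by
  rw [qbinom_of_add_eq rfl, qbinom_of_add_eq rfl,
    show k + 1 + (k + 1 + 1) = 2 * k + 2 + 1 by omega, show k + (k + 1) = 2 * k + 1 by omega, qfact_succ (2 * k + 2), qfact_succ (2 * k + 1),
    qfact_succ (k + 1), qfact_succ k]
  have := (qfact_pos hq0 hq1 (2 * k + 1)).ne'
  have := (qfact_pos hq0 hq1 k).ne'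
  have := qint_pos hq0 hq1 k.succ_ne_zero
  have := qint_pos hq0 hq1 (k + 1).succ_ne_zero
  field_simp

lemma tendsto_qbinom_central_succ_div (hq0 : 0 ≤ q) (hq1 : q < 1) :
    Tendsto (fun k => qbinom q (k + 1 + (k + 1 + 1)) (k + 1) / qbinom q (k + (k + 1)) k)
      atTop (𝓝 1) := by
  have hI (f : ℕ → ℕ) (hf : ∀ k, k ≤ f k) :
      Tendsto (fun k => qint q (f k)) atTop (𝓝 (1 - q)⁻¹) :=
    (tendsto_qint_atTop (abs_lt.mpr ⟨by linarith, hq1⟩)).comp (tendsto_atTop_mono hf tendsto_id)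
  have hL : (1 - q)⁻¹ * (1 - q)⁻¹ ≠ 0 := by simp [sub_ne_zero, hq1.ne']
  simp_rw [qbinom_central_succ_div hq0 hq1.ne]
  rw [← div_self hL]
  exact ((hI _ fun k => by omega).mul (hI _ fun k => by omega)).div
    ((hI _ fun k => by omega).mul (hI _ fun k => by omega)) hL

/-- For `0 < q < 1`, the ratio `H_{n+1}^{(n+1)}(q) / H_n^{(n)}(q)` tends to `q` as `n → ∞`. -/
theorem qhyp_diag_ratio_tendsto (q : ℝ) (hq0 : 0 < q) (hq1 : q < 1) :
    Filter.Tendsto (fun n : ℕ => qhyp q (n + 1) (n + 1) / qhyp q n n)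
      Filter.atTop (nhds q) := by
  rw [← tendsto_add_atTop_iff_nat 1]
  simp_rw [qhyp_succ_eq hq0 hq1.ne, mul_div_mul_comm]
  have hbinom := tendsto_qbinom_central_succ_div hq0.le hq1
  have hharm := tendsto_succ_div_of_tendsto_div_pow hq0.ne' one_ne_zero
    (tendsto_qharm_central_sub_div_pow hq0 hq1)
  simpa using hbinom.mul hharm
end

section
/- For all positive integers $n$ and $r$, the hyperharmonic numbers satisfy the recurrence $H_n^{(r+1)} = \frac{n+r}{r} H_n^{(r)} - \frac{1}{r} \binom{n+r-1}{r}$. -/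
/-- The harmonic number `H_n = ∑_{j=1}^n 1/j`. -/
noncomputable def harm (n : ℕ) : ℝ := ∑ j ∈ Finset.Icc 1 n, (1 : ℝ) / j

/-- The hyperharmonic numbers: `H_n^{(1)} = H_n` and
`H_n^{(r)} = ∑_{ℓ=1}^n H_ℓ^{(r-1)}` for `r ≥ 2` (so `H_0^{(r)} = 0`). -/
noncomputable def hyp : ℕ → ℕ → ℝ
  | 0, _ => 0
  | 1, n => harm n
  | r + 2, n => ∑ ℓ ∈ Finset.Icc 1 n, hyp (r + 1) ℓ

/-- The rising factorial `(x)^{(m)} = x (x+1) ⋯ (x+m-1)`, with `(x)^{(0)} = 1`. -/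
noncomputable def rise (x : ℝ) (m : ℕ) : ℝ := ∏ i ∈ Finset.range m, (x + i)

/-! The hyperharmonic numbers have the closed form `H_n^{(r+1)} = C(n+r, r) (H_{n+r} - H_r)`,
proved by induction on `r` and `n` from `H_{n+1}^{(r+2)} = H_n^{(r+2)} + H_{n+1}^{(r+1)}`, Pascal's
rule and the absorption identity `(m+1) C(m, k) = (k+1) C(m+1, k+1)`. Substituting the closed form
for both orders, the recurrence reduces to the same two binomial identities together with
`H_{m+1} = H_m + 1/(m+1)`. -/

lemma harm_succ (m : ℕ) : harm (m + 1) = harm m + 1 / (m + 1) := by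
  rw [harm, harm, Finset.sum_Icc_succ_top (by omega)]
  push_cast
  rfl

lemma hyp_add_two_succ (r n : ℕ) :
    hyp (r + 2) (n + 1) = hyp (r + 2) n + hyp (r + 1) (n + 1) := by
  simp only [hyp]
  exact Finset.sum_Icc_succ_top (by omega) _

lemma cast_choose_succ_succ (m k : ℕ) :
    ((m + 1).choose (k + 1) : ℝ) = m.choose k + m.choose (k + 1) := by
  exact_mod_cast Nat.choose_succ_succ' m k

lemma cast_add_one_mul_choose (m k : ℕ) :
    ((m : ℝ) + 1) * m.choose k = (m + 1).choose (k + 1) * (k + 1) := by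
  exact_mod_cast Nat.add_one_mul_choose_eq m k

theorem hyp_succ_eq_choose_mul (r n : ℕ) :
    hyp (r + 1) n = (n + r).choose r * (harm (n + r) - harm r) := by
  induction r generalizing n with
  | zero => simp [hyp, harm]
  | succ r ih =>
    induction n with
    | zero => simp [hyp]
    | succ n ihn =>
      rw [hyp_add_two_succ, ihn, ih, show n + 1 + (r + 1) = n + r + 1 + 1 by omega,
        show n + (r + 1) = n + r + 1 by omega, show n + 1 + r = n + r + 1 by omega,
        harm_succ (n + r + 1), harm_succ r]
      have pascal := cast_choose_succ_succ (n + r + 1) r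
      have absorb := cast_add_one_mul_choose (n + r + 1) r
      push_cast at absorb ⊢
      field_simp
      linear_combination ((n + r + 2 : ℝ) - (n + r + 2) * (r + 1) * (harm (n + r + 1) - harm r)) *
        pascal + absorb

theorem hyp_succ_order_general (n r : ℕ) (hr : 1 ≤ r) :
    hyp (r + 1) n =
      ((n : ℝ) + r) / r * hyp r n - 1 / r * ((n + r - 1).choose r : ℝ) := by
  obtain ⟨s, rfl⟩ : ∃ s, r = s + 1 := ⟨r - 1, by omega⟩
  rw [hyp_succ_eq_choose_mul, hyp_succ_eq_choose_mul, show n + (s + 1) = n + s + 1 by omega,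
    Nat.add_sub_cancel, harm_succ (n + s), harm_succ s]
  have pascal := cast_choose_succ_succ (n + s) s
  have absorb := cast_add_one_mul_choose (n + s) s
  push_cast at absorb ⊢
  field_simp
  linear_combination (-(n + s + 1 : ℝ) * (harm (n + s) - harm s) - 1) * absorb -
    (n + s + 1) * pascal

/-- For positive integers `n, r`,
`H_n^{(r+1)} = ((n+r)/r) H_n^{(r)} - (1/r) C(n+r-1, r)`. -/
theorem hyp_succ_order (n r : ℕ) (hn : 1 ≤ n) (hr : 1 ≤ r) :
    hyp (r + 1) n =
      ((n : ℝ) + r) / r * hyp r n - 1 / r * ((n + r - 1).choose r : ℝ) :=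
  hyp_succ_order_general n r hr
end
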